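/- arXiv:2001.02710 — 3 statements merged into one kernel-verified Lean document; each statement's English description precedes it below -/
import Mathlib

section
/- Let g ≥ 3. Every function t from the boxes of the rectangular diagram with g-2 rows and 2 columns to {1, ..., g} that strictly increases along rows and columns is of the form λ_{a,b} for unique integers a, b with 1 ≤ a, b ≤ g and b ≥ a - 1, where λ_{a,b} is obtained from the unique tableau Λ(x,y) = x+y+1 on the (g-1)×2 rectangle by deleting the box containing a from column 1 and the box containing b from column 0 and sliding the remaining boxes up in each column. -/
/-- Every tableau on the (g-2)×2 rectangle is of the form `λ_{a,b}` for unique integers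
`a, b` with `2 ≤ a ≤ g`, `1 ≤ b ≤ g-1` and `b ≥ a - 1`, obtained from the unique tableau
`Λ(x,y) = x+y+1` on the (g-1)×2 rectangle by deleting the box containing `a` from column 1
and the box containing `b` from column 0 and sliding the remaining boxes up. -/
theorem stmt4 (g : ℕ) (hg : 3 ≤ g) (t : Fin 2 → Fin (g - 2) → ℕ)
    (hval : ∀ x y, 1 ≤ t x y ∧ t x y ≤ g)
    (hrow : ∀ y : Fin (g - 2), ∀ x x' : Fin 2, x < x' → t x y < t x' y)
    (hcol : ∀ x : Fin 2, ∀ y y' : Fin (g - 2), y < y' → t x y < t x y') :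
    ∃! p : ℕ × ℕ,
      (1 ≤ p.1 ∧ 2 ≤ p.1 ∧ p.1 ≤ g ∧ 1 ≤ p.2 ∧ p.2 ≤ g - 1 ∧ p.2 ≤ g ∧ p.1 ≤ p.2 + 1) ∧
      ∀ y : Fin (g - 2),
        t 0 y = (if (y : ℕ) + 1 < p.2 then (y : ℕ) + 1 else (y : ℕ) + 2) ∧
        t 1 y = (if (y : ℕ) + 2 < p.1 then (y : ℕ) + 2 else (y : ℕ) + 3) := by
  classical
  obtain ⟨m, rfl⟩ : ∃ m, g = m + 3 := ⟨g - 3, by omega⟩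
  -- monotonicity along columns, quantitative version
  have key : ∀ x : Fin 2, ∀ j i : ℕ, ∀ (hj : j < m + 3 - 2) (hi : i < m + 3 - 2), i ≤ j →
      t x ⟨i, hi⟩ + (j - i) ≤ t x ⟨j, hj⟩ := by
    intro x j
    induction j with
    | zero =>
      intro i hj hi hij
      obtain rfl : i = 0 := by omega
      simp
    | succ j ih =>
      intro i hj hi hij
      rcases Nat.lt_or_ge i (j + 1) with h | h
      · have hj' : j < m + 3 - 2 := by omega
        have h1 := ih i hj' hi (by omega)
        have h2 := hcol x ⟨j, hj'⟩ ⟨j + 1, hj⟩ (by simp [Fin.mk_lt_mk])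
        omega
      · obtain rfl : i = j + 1 := by omega
        simp
  have h01 : ∀ y : Fin (m + 3 - 2), t 0 y < t 1 y := fun y => hrow y 0 1 (by decide)
  have h0N : (0 : ℕ) < m + 3 - 2 := by omega
  have hmN : m < m + 3 - 2 := by omega
  -- bounds on column 0
  have hb0 : ∀ y : Fin (m + 3 - 2), (y : ℕ) + 1 ≤ t 0 y ∧ t 0 y ≤ (y : ℕ) + 2 := by
    intro y
    have hy := y.isLt
    have h1 := key 0 (y : ℕ) 0 y.isLt h0N (by omega)
    have h2 := key 0 m (y : ℕ) hmN y.isLt (by omega)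
    rw [Fin.eta] at h1 h2
    have h3 := (hval 0 ⟨0, h0N⟩).1
    have h4 := h01 ⟨m, hmN⟩
    have h5 := (hval 1 ⟨m, hmN⟩).2
    omega
  -- bounds on column 1
  have hb1 : ∀ y : Fin (m + 3 - 2), (y : ℕ) + 2 ≤ t 1 y ∧ t 1 y ≤ (y : ℕ) + 3 := by
    intro y
    have hy := y.isLt
    have h1 := key 1 (y : ℕ) 0 y.isLt h0N (by omega)
    have h2 := key 1 m (y : ℕ) hmN y.isLt (by omega)
    rw [Fin.eta] at h1 h2
    have h3 := (hval 0 ⟨0, h0N⟩).1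
    have h4 := h01 ⟨0, h0N⟩
    have h5 := (hval 1 ⟨m, hmN⟩).2
    omega
  -- existence of b
  have hB : ∃ b : ℕ, 1 ≤ b ∧ b ≤ m + 2 ∧
      ∀ y : Fin (m + 3 - 2), t 0 y = if (y : ℕ) + 1 < b then (y : ℕ) + 1 else (y : ℕ) + 2 := by
    by_cases hP : ∃ k : ℕ, ∃ hk : k < m + 3 - 2, t 0 ⟨k, hk⟩ = k + 2
    · refine ⟨Nat.find hP + 1, by omega, ?_, ?_⟩
      · obtain ⟨hk, hk2⟩ := Nat.find_spec hP
        omega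
      · intro y
        have hy := y.isLt
        by_cases hlt : (y : ℕ) < Nat.find hP
        · have hne := Nat.find_min hP hlt
          push_neg at hne
          have h1 := hne y.isLt
          rw [Fin.eta] at h1
          have h2 := hb0 y
          rw [if_pos (by omega)]
          omega
        · obtain ⟨hk, hk2⟩ := Nat.find_spec hP
          have h1 := key 0 (y : ℕ) (Nat.find hP) y.isLt hk (by omega)
          rw [Fin.eta] at h1
          have h2 := (hb0 y).2
          rw [if_neg (by omega)]
          omega
    · push_neg at hP
      refine ⟨m + 2, by omega, le_refl _, ?_⟩
      intro y
      have hy := y.isLt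
      have h1 := hP y y.isLt
      rw [Fin.eta] at h1
      have h2 := hb0 y
      rw [if_pos (by omega)]
      omega
  -- existence of a
  have hA : ∃ a : ℕ, 2 ≤ a ∧ a ≤ m + 3 ∧
      ∀ y : Fin (m + 3 - 2), t 1 y = if (y : ℕ) + 2 < a then (y : ℕ) + 2 else (y : ℕ) + 3 := by
    by_cases hP : ∃ k : ℕ, ∃ hk : k < m + 3 - 2, t 1 ⟨k, hk⟩ = k + 3
    · refine ⟨Nat.find hP + 2, by omega, ?_, ?_⟩
      · obtain ⟨hk, hk2⟩ := Nat.find_spec hP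
        omega
      · intro y
        have hy := y.isLt
        by_cases hlt : (y : ℕ) < Nat.find hP
        · have hne := Nat.find_min hP hlt
          push_neg at hne
          have h1 := hne y.isLt
          rw [Fin.eta] at h1
          have h2 := hb1 y
          rw [if_pos (by omega)]
          omega
        · obtain ⟨hk, hk2⟩ := Nat.find_spec hP
          have h1 := key 1 (y : ℕ) (Nat.find hP) y.isLt hk (by omega)
          rw [Fin.eta] at h1
          have h2 := (hb1 y).2
          rw [if_neg (by omega)]
          omega
    · push_neg at hP
      refine ⟨m + 3, by omega, le_refl _, ?_⟩
      intro y
      have hy := y.isLt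
      have h1 := hP y y.isLt
      rw [Fin.eta] at h1
      have h2 := hb1 y
      rw [if_pos (by omega)]
      omega
  obtain ⟨b, hb1', hb2', hbf⟩ := hB
  obtain ⟨a, ha1', ha2', haf⟩ := hA
  -- the constraint a ≤ b + 1
  have hab : a ≤ b + 1 := by
    by_contra hab
    push_neg at hab
    have hbm : b - 1 < m + 3 - 2 := by omega
    have h0y := hbf ⟨b - 1, hbm⟩
    have h1y := haf ⟨b - 1, hbm⟩
    have hv : ((⟨b - 1, hbm⟩ : Fin (m + 3 - 2)) : ℕ) = b - 1 := rfl
    rw [hv] at h0y h1y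
    rw [if_neg (by omega)] at h0y
    rw [if_pos (by omega)] at h1y
    have := h01 ⟨b - 1, hbm⟩
    omega
  refine ⟨(a, b), ⟨⟨by omega, ha1', by omega, hb1', by omega, by omega, hab⟩,
    fun y => ⟨hbf y, haf y⟩⟩, ?_⟩
  rintro ⟨a', b'⟩ ⟨⟨_, ha1'', ha2'', hb1'', hb2'', _, _⟩, hf⟩
  have hbeq : b' = b := by
    rcases lt_trichotomy b' b with h | h | h
    · exfalso
      have hy : b' - 1 < m + 3 - 2 := by omega
      have h1 := (hf ⟨b' - 1, hy⟩).1
      have h2 := hbf ⟨b' - 1, hy⟩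
      have hv : ((⟨b' - 1, hy⟩ : Fin (m + 3 - 2)) : ℕ) = b' - 1 := rfl
      rw [hv] at h1 h2
      rw [if_neg (by omega)] at h1
      rw [if_pos (by omega)] at h2
      omega
    · exact h
    · exfalso
      have hy : b - 1 < m + 3 - 2 := by omega
      have h1 := (hf ⟨b - 1, hy⟩).1
      have h2 := hbf ⟨b - 1, hy⟩
      have hv : ((⟨b - 1, hy⟩ : Fin (m + 3 - 2)) : ℕ) = b - 1 := rfl
      rw [hv] at h1 h2
      rw [if_pos (by omega)] at h1
      rw [if_neg (by omega)] at h2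
      omega
  have haeq : a' = a := by
    rcases lt_trichotomy a' a with h | h | h
    · exfalso
      have hy : a' - 2 < m + 3 - 2 := by omega
      have h1 := (hf ⟨a' - 2, hy⟩).2
      have h2 := haf ⟨a' - 2, hy⟩
      have hv : ((⟨a' - 2, hy⟩ : Fin (m + 3 - 2)) : ℕ) = a' - 2 := rfl
      rw [hv] at h1 h2
      rw [if_neg (by omega)] at h1
      rw [if_pos (by omega)] at h2
      omega
    · exact h
    · exfalso
      have hy : a - 2 < m + 3 - 2 := by omega
      have h1 := (hf ⟨a - 2, hy⟩).2
      have h2 := haf ⟨a - 2, hy⟩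
      have hv : ((⟨a - 2, hy⟩ : Fin (m + 3 - 2)) : ℕ) = a - 2 := rfl
      rw [hv] at h1 h2
      rw [if_pos (by omega)] at h1
      rw [if_neg (by omega)] at h2
      omega
  simp [haeq, hbeq]
end

section
/- Let k ≥ 2 and g ≥ k. The tableaux on the (g-k+1)×2 rectangle with values in {1,...,g}, strictly increasing along rows and columns, are exactly those obtained from the tableau Λ(x,y) = x+y+1 on the (g-1)×2 rectangle by deleting k-2 boxes from each column and sliding up, subject to the condition that above every row, the number of boxes deleted from column 0 does not exceed the number deleted from column 1. -/
private lemma aux_filter_Icc (a b m : ℕ) :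
    ((Finset.Icc a b).filter (fun s => s ≤ m)).card = min b m + 1 - a := by
  have : (Finset.Icc a b).filter (fun s => s ≤ m) = Finset.Icc a (min b m) := by
    ext z; simp only [Finset.mem_filter, Finset.mem_Icc]; omega
  rw [this, Nat.card_Icc]

private lemma aux_card_filter_sdiff (S T : Finset ℕ) (h : S ⊆ T) (m : ℕ) :
    ((T \ S).filter (fun s => s ≤ m)).card + (S.filter (fun s => s ≤ m)).card
      = (T.filter (fun s => s ≤ m)).card := by
  have h1 : (T \ S).filter (fun s => s ≤ m)
      = T.filter (fun s => s ≤ m) \ S.filter (fun s => s ≤ m) := by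
    ext z; simp only [Finset.mem_filter, Finset.mem_sdiff]; tauto
  rw [h1, Finset.card_sdiff_add_card_eq_card (Finset.monotone_filter_left _ h)]

private lemma aux_card_image_filter {n : ℕ} (f : Fin n → ℕ) (hf : StrictMono f) (c : ℕ) :
    ((Finset.image f Finset.univ).filter (fun s => s ≤ c)).card
      = (Finset.univ.filter (fun z => f z ≤ c)).card := by
  rw [Finset.filter_image, Finset.card_image_of_injective _ hf.injective]

/-- Tableaux on the (g-k+1)×2 rectangle are exactly those obtained from `Λ(x,y) = x+y+1`
on the (g-1)×2 rectangle by deleting k-2 boxes from each column (column 0 has symbols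
1,…,g-1, column 1 has symbols 2,…,g) and sliding up, where above every row the number of
boxes deleted from column 0 does not exceed the number deleted from column 1. -/
theorem stmt10 (g k : ℕ) (hk : 2 ≤ k) (hg : k ≤ g) (t : Fin 2 → Fin (g - k + 1) → ℕ) :
    ((∀ x y, 1 ≤ t x y ∧ t x y ≤ g) ∧
        (∀ y, t 0 y < t 1 y) ∧
        (∀ x, StrictMono (t x))) ↔
      ∃ S0 S1 : Finset ℕ,
        S0 ⊆ Finset.Icc 1 (g - 1) ∧ S1 ⊆ Finset.Icc 2 g ∧
        S0.card = k - 2 ∧ S1.card = k - 2 ∧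
        (∀ m : ℕ, (S0.filter (fun s => s ≤ m)).card ≤
          (S1.filter (fun s => s ≤ m + 1)).card) ∧
        StrictMono (t 0) ∧ StrictMono (t 1) ∧
        Finset.image (t 0) Finset.univ = Finset.Icc 1 (g - 1) \ S0 ∧
        Finset.image (t 1) Finset.univ = Finset.Icc 2 g \ S1 := by
  constructor
  · rintro ⟨hbound, hrow, hcol⟩
    have h0 : StrictMono (t 0) := hcol 0
    have h1 : StrictMono (t 1) := hcol 1
    set A0 := Finset.image (t 0) Finset.univ with hA0
    set A1 := Finset.image (t 1) Finset.univ with hA1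
    have hA0card : A0.card = g - k + 1 := by
      rw [hA0, Finset.card_image_of_injective _ h0.injective, Finset.card_univ,
        Fintype.card_fin]
    have hA1card : A1.card = g - k + 1 := by
      rw [hA1, Finset.card_image_of_injective _ h1.injective, Finset.card_univ,
        Fintype.card_fin]
    have hA0sub : A0 ⊆ Finset.Icc 1 (g - 1) := by
      intro z hz
      rw [hA0, Finset.mem_image] at hz
      obtain ⟨y, -, rfl⟩ := hz
      have := hbound 0 y
      have := hbound 1 y
      have := hrow y
      rw [Finset.mem_Icc]; omega
    have hA1sub : A1 ⊆ Finset.Icc 2 g := by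
      intro z hz
      rw [hA1, Finset.mem_image] at hz
      obtain ⟨y, -, rfl⟩ := hz
      have := hbound 0 y
      have := hbound 1 y
      have := hrow y
      rw [Finset.mem_Icc]; omega
    refine ⟨Finset.Icc 1 (g - 1) \ A0, Finset.Icc 2 g \ A1, Finset.sdiff_subset,
      Finset.sdiff_subset, ?_, ?_, ?_, h0, h1, ?_, ?_⟩
    · rw [Finset.card_sdiff_of_subset hA0sub, Nat.card_Icc, hA0card]; omega
    · rw [Finset.card_sdiff_of_subset hA1sub, Nat.card_Icc, hA1card]; omega
    · intro m
      have e0 := aux_card_filter_sdiff A0 _ hA0sub m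
      have e1 := aux_card_filter_sdiff A1 _ hA1sub (m + 1)
      rw [aux_filter_Icc, hA0, aux_card_image_filter _ h0] at e0
      rw [aux_filter_Icc, hA1, aux_card_image_filter _ h1] at e1
      have hsub : (Finset.univ.filter (fun z => t 1 z ≤ m + 1))
          ⊆ (Finset.univ.filter (fun z => t 0 z ≤ m)) := by
        intro z hz
        simp only [Finset.mem_filter, Finset.mem_univ, true_and] at hz ⊢
        have := hrow z; omega
      have hle := Finset.card_le_card hsub
      rw [hA0, hA1]
      omega
    · rw [Finset.sdiff_sdiff_eq_self hA0sub]
    · rw [Finset.sdiff_sdiff_eq_self hA1sub]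
  · rintro ⟨S0, S1, hS0sub, hS1sub, hS0card, hS1card, hfil, h0, h1, hI0, hI1⟩
    have hmem0 : ∀ y, t 0 y ∈ Finset.Icc 1 (g - 1) \ S0 := by
      intro y; rw [← hI0]; exact Finset.mem_image_of_mem _ (Finset.mem_univ y)
    have hmem1 : ∀ y, t 1 y ∈ Finset.Icc 2 g \ S1 := by
      intro y; rw [← hI1]; exact Finset.mem_image_of_mem _ (Finset.mem_univ y)
    have hb0 : ∀ y, 1 ≤ t 0 y ∧ t 0 y ≤ g - 1 := by
      intro y
      have := hmem0 y
      rw [Finset.mem_sdiff, Finset.mem_Icc] at this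
      exact this.1
    have hb1 : ∀ y, 2 ≤ t 1 y ∧ t 1 y ≤ g := by
      intro y
      have := hmem1 y
      rw [Finset.mem_sdiff, Finset.mem_Icc] at this
      exact this.1
    have hrow : ∀ y, t 0 y < t 1 y := by
      intro y
      by_contra hcon
      push_neg at hcon
      set c := t 1 y with hc
      have hc2 : 2 ≤ c := (hb1 y).1
      have hcg : c ≤ g := (hb1 y).2
      have hfc := hfil (c - 1)
      have hc1 : c - 1 + 1 = c := by omega
      rw [hc1] at hfc
      -- count |S1.filter ≤ c|
      have e1 : (S1.filter (fun s => s ≤ c)).card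
            + ((Finset.Icc 2 g \ S1).filter (fun s => s ≤ c)).card
          = ((Finset.Icc 2 g).filter (fun s => s ≤ c)).card := by
        have := aux_card_filter_sdiff S1 _ hS1sub c; omega
      rw [aux_filter_Icc, ← hI1, aux_card_image_filter _ h1] at e1
      have hfilt1 : Finset.univ.filter (fun z => t 1 z ≤ c) = Finset.Iic y := by
        ext z
        simp only [Finset.mem_filter, Finset.mem_univ, true_and, Finset.mem_Iic, hc,
          h1.le_iff_le]
      rw [hfilt1, Fin.card_Iic] at e1
      -- count |S0.filter ≤ c-1|
      have e0 : (S0.filter (fun s => s ≤ c - 1)).card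
            + ((Finset.Icc 1 (g - 1) \ S0).filter (fun s => s ≤ c - 1)).card
          = ((Finset.Icc 1 (g - 1)).filter (fun s => s ≤ c - 1)).card := by
        have := aux_card_filter_sdiff S0 _ hS0sub (c - 1); omega
      rw [aux_filter_Icc, ← hI0, aux_card_image_filter _ h0] at e0
      have hsub0 : Finset.univ.filter (fun z => t 0 z ≤ c - 1) ⊆ Finset.Iio y := by
        intro z hz
        simp only [Finset.mem_filter, Finset.mem_univ, true_and] at hz
        have hlt : t 0 z < t 0 y := by omega
        rw [Finset.mem_Iio]
        exact h0.lt_iff_lt.mp hlt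
      have hle0 := Finset.card_le_card hsub0
      rw [Fin.card_Iio] at hle0
      have := hmem1 y
      omega
    refine ⟨?_, hrow, ?_⟩
    · intro x y
      fin_cases x
      · show 1 ≤ t 0 y ∧ t 0 y ≤ g
        have := hb0 y; have := hrow y; have := hb1 y; constructor <;> omega
      · show 1 ≤ t 1 y ∧ t 1 y ≤ g
        have := hb1 y; constructor <;> omega
    · intro x
      fin_cases x
      · exact h0
      · exact h1
end

section
/- Let g, k be positive integers with k ≥ 2, and let t be a function from the boxes of an (r+1)-column, (g - kc + r)-row rectangle to {1,...,g}, strictly increasing along rows and columns, such that every entry in column x satisfies t(x, y) ≥ x(k-1) + y + 1. If r ≥ c + 1 and g > c(k-1), then no such t exists with r + 1 ≥ c + 2 columns; consequently any such tableau has at most c+1 columns. -/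
/-- If every entry in column `x` of a tableau on an `(r+1)`-column, `(g - kc + r)`-row
rectangle is at least `x(k-1) + y + 1`, `r ≥ c + 1` and `g > c(k-1)`, then no such tableau
exists; hence any such tableau has at most `c+1` columns. -/
theorem stmt12 (g k c r : ℕ) (hk : 2 ≤ k) (hg : 0 < g) (hr : c + 1 ≤ r)
    (hgc : c * (k - 1) < g)
    (t : Fin (r + 1) → Fin (g + r - k * c) → ℕ)
    (hval : ∀ x y, 1 ≤ t x y ∧ t x y ≤ g)
    (hrow : ∀ y, StrictMono (fun x => t x y))
    (hcol : ∀ x, StrictMono (t x))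
    (hbound : ∀ (x : Fin (r + 1)) (y : Fin (g + r - k * c)),
      (x : ℕ) * (k - 1) + (y : ℕ) + 1 ≤ t x y) : False := by
  have hmul : c * (k - 1) + c = c * k := by
    rw [← Nat.mul_succ]
    congr 1
    omega
  have hcomm : k * c = c * k := Nat.mul_comm k c
  have hrows : 0 < g + r - k * c := by omega
  have hx : c + 1 < r + 1 := by omega
  have hy : g + r - k * c - 1 < g + r - k * c := by omega
  have hb := hbound ⟨c + 1, hx⟩ ⟨g + r - k * c - 1, hy⟩
  have hv := (hval ⟨c + 1, hx⟩ ⟨g + r - k * c - 1, hy⟩).2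
  simp only [Fin.val_mk] at hb
  have hexp : (c + 1) * (k - 1) = c * (k - 1) + (k - 1) := by ring
  rw [hexp] at hb
  omega
end
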